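/- For the switch channel, let 𝒱 be any finite set and let (S,V,X₁,X₂,Y) be random variables whose joint pmf has the product form (1/2)·P_{X₂}(x₂)·P_{X₁|X₂}(x₁|x₂)·P_{V|S,X₁,X₂}(v|s,x₁,x₂) with Y = X_S. If I(V,X₁,X₂ ; Y) - I(V,X₁,X₂ ; S) ≥ 1, then H(Y) = 1, S is independent of (V,X₁,X₂), H(Y | X₁,X₂) = 0, and P(X₁ = X₂) = 1. -/

import Mathlib

open scoped BigOperators
open Classical

noncomputable section

/-- Probability that the random variable `X` equals `x` under the pmf `p`. -/
def pr {Ω α : Type*} [Fintype Ω] (p : Ω → ℝ) (X : Ω → α) (x : α) : ℝ :=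
  ∑ ω : Ω, if X ω = x then p ω else 0

/-- Shannon entropy (in bits), with the convention `0 · log₂ 0 = 0`. -/
def ent {Ω α : Type*} [Fintype Ω] (p : Ω → ℝ) (X : Ω → α) : ℝ :=
  -∑ x ∈ Finset.univ.image X, pr p X x * Real.logb 2 (pr p X x)

/-- Conditional entropy `H(X|Y) = H(X,Y) - H(Y)`. -/
def condEnt {Ω α β : Type*} [Fintype Ω] (p : Ω → ℝ) (X : Ω → α) (Y : Ω → β) : ℝ :=
  ent p (fun ω => (X ω, Y ω)) - ent p Y

/-- Mutual information `I(X;Y) = H(X) + H(Y) - H(X,Y)`. -/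
def mi {Ω α β : Type*} [Fintype Ω] (p : Ω → ℝ) (X : Ω → α) (Y : Ω → β) : ℝ :=
  ent p X + ent p Y - ent p (fun ω => (X ω, Y ω))

/-- Conditional mutual information `I(X;Y|Z) = H(X,Z) + H(Y,Z) - H(X,Y,Z) - H(Z)`. -/
def cmi {Ω α β γ : Type*} [Fintype Ω] (p : Ω → ℝ) (X : Ω → α) (Y : Ω → β) (Z : Ω → γ) : ℝ :=
  ent p (fun ω => (X ω, Z ω)) + ent p (fun ω => (Y ω, Z ω))
    - ent p (fun ω => (X ω, Y ω, Z ω)) - ent p Z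

/-- `p` is a probability mass function on the finite sample space `Ω`. -/
def IsPMF {Ω : Type*} [Fintype Ω] (p : Ω → ℝ) : Prop :=
  (∀ ω, 0 ≤ p ω) ∧ ∑ ω : Ω, p ω = 1

/-- The random variables `X` and `Y` are independent under `p`. -/
def IndepRV {Ω α β : Type*} [Fintype Ω] (p : Ω → ℝ) (X : Ω → α) (Y : Ω → β) : Prop :=
  ∀ x y, pr p (fun ω => (X ω, Y ω)) (x, y) = pr p X x * pr p Y y

end

/-! With `W = (V, X₁, X₂)`, the hypothesis `I(W;Y) - I(W;S) ≥ 1` is squeezed between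
`I(W;Y) ≤ H(Y) ≤ log₂ |𝒴| = 1` and `I(W;S) ≥ 0`, so all of these are tight: `H(Y) = 1`,
`I(W;S) = 0`, which is independence by the equality case of Gibbs' inequality, and
`H(W,Y) = H(W)`, i.e. `Y` is a function of `W` on the support.
Since `S` is uniform and independent of `W`, every value of `W` in the support occurs with both
states, where `Y` equals `X₁` and `X₂` respectively; hence `X₁ = X₂` almost surely, and then
`Y = X₁` is a function of `(X₁, X₂)`. -/

open Real

section Pmf

variable {Ω α β : Type*} [Fintype Ω] {p : Ω → ℝ}

lemma pr_nonneg (hp : ∀ ω, 0 ≤ p ω) (X : Ω → α) (x : α) : 0 ≤ pr p X x :=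
  Finset.sum_nonneg fun ω _ => by split_ifs <;> simp [hp ω]

lemma le_pr_self (hp : ∀ ω, 0 ≤ p ω) (X : Ω → α) (ω : Ω) : p ω ≤ pr p X (X ω) := by
  unfold pr
  simpa using Finset.single_le_sum (f := fun ω' => if X ω' = X ω then p ω' else 0)
    (fun ω' _ => by split_ifs <;> simp [hp ω']) (Finset.mem_univ ω)

lemma exists_ne_zero_of_pr_ne_zero {X : Ω → α} {x : α} (h : pr p X x ≠ 0) :
    ∃ ω, p ω ≠ 0 ∧ X ω = x := by
  obtain ⟨ω, -, hω⟩ := Finset.exists_ne_zero_of_sum_ne_zero h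
  by_cases hx : X ω = x
  · exact ⟨ω, by simpa [hx] using hω, hx⟩
  · simp [hx] at hω

lemma pr_congr {X Y : Ω → α} (h : ∀ ω, p ω ≠ 0 → X ω = Y ω) : pr p X = pr p Y := by
  funext x
  refine Finset.sum_congr rfl fun ω _ => ?_
  by_cases hω : p ω = 0
  · simp [hω]
  · rw [h ω hω]

lemma sum_pr [Fintype α] (X : Ω → α) : ∑ x, pr p X x = ∑ ω, p ω := by
  unfold pr
  rw [Finset.sum_comm]
  simp

lemma sum_pr_pair_right [Fintype β] (X : Ω → α) (Y : Ω → β) (x : α) :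
    ∑ y, pr p (fun ω => (X ω, Y ω)) (x, y) = pr p X x := by
  unfold pr
  rw [Finset.sum_comm]
  simp [Prod.ext_iff, ite_and]

lemma sum_pr_pair_left [Fintype α] (X : Ω → α) (Y : Ω → β) (y : β) :
    ∑ x, pr p (fun ω => (X ω, Y ω)) (x, y) = pr p Y y := by
  unfold pr
  rw [Finset.sum_comm]
  simp [Prod.ext_iff, ite_and]

lemma pr_pair_le_left (hp : ∀ ω, 0 ≤ p ω) (X : Ω → α) (Y : Ω → β) (x : α) (y : β) :
    pr p (fun ω => (X ω, Y ω)) (x, y) ≤ pr p X x :=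
  Finset.sum_le_sum fun ω _ => by split_ifs <;> simp_all

lemma pr_pair_le_right (hp : ∀ ω, 0 ≤ p ω) (X : Ω → α) (Y : Ω → β) (x : α) (y : β) :
    pr p (fun ω => (X ω, Y ω)) (x, y) ≤ pr p Y y :=
  Finset.sum_le_sum fun ω _ => by split_ifs <;> simp_all

lemma pr_pair_eq_zero_of_pr_left_eq_zero (hp : ∀ ω, 0 ≤ p ω) {X : Ω → α} {x : α}
    (h : pr p X x = 0) (Y : Ω → β) (y : β) : pr p (fun ω => (X ω, Y ω)) (x, y) = 0 :=
  le_antisymm (h ▸ pr_pair_le_left hp X Y x y) (pr_nonneg hp _ _)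

lemma pr_pair_eq_zero_of_pr_right_eq_zero (hp : ∀ ω, 0 ≤ p ω) (X : Ω → α) {Y : Ω → β} {y : β}
    (h : pr p Y y = 0) (x : α) : pr p (fun ω => (X ω, Y ω)) (x, y) = 0 :=
  le_antisymm (h ▸ pr_pair_le_right hp X Y x y) (pr_nonneg hp _ _)

lemma pr_pair_mul_logb_le (hp : ∀ ω, 0 ≤ p ω) (X : Ω → α) (Y : Ω → β) (z : α × β) :
    pr p (fun ω => (X ω, Y ω)) z * logb 2 (pr p (fun ω => (X ω, Y ω)) z)
      ≤ pr p (fun ω => (X ω, Y ω)) z * logb 2 (pr p X z.1) := by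
  rcases (pr_nonneg hp _ z).eq_or_lt with h | h
  · rw [← h, zero_mul, zero_mul]
  · exact mul_le_mul_of_nonneg_left
      (logb_le_logb_of_le one_lt_two h (pr_pair_le_left hp X Y z.1 z.2)) h.le

lemma sum_ite_eq_one_of_forall_ne_zero (hp : IsPMF p) {P : Ω → Prop} [DecidablePred P]
    (h : ∀ ω, p ω ≠ 0 → P ω) : (∑ ω, if P ω then p ω else 0) = 1 := by
  rw [← hp.2]
  refine Finset.sum_congr rfl fun ω _ => ?_
  by_cases hω : p ω = 0
  · simp [hω]
  · simp [h ω hω]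

lemma pr_eq_of_pr_eq_mul_kernels {ι γ α β : Type*} [Fintype γ] [Fintype α] [Fintype β]
    {S : Ω → ι} {V : Ω → γ} {X₁ : Ω → α} {X₂ : Ω → β} {c : ℝ} {P₂ : β → ℝ}
    {P₁₂ : α → β → ℝ} {PV : ι → α → β → γ → ℝ} (h₂ : ∑ x₂, P₂ x₂ = 1)
    (h₁₂ : ∀ x₂, ∑ x₁, P₁₂ x₁ x₂ = 1) (hV : ∀ s x₁ x₂, ∑ v, PV s x₁ x₂ v = 1)
    (h : ∀ s v x₁ x₂, pr p (fun ω => (S ω, V ω, X₁ ω, X₂ ω)) (s, v, x₁, x₂)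
      = c * P₂ x₂ * P₁₂ x₁ x₂ * PV s x₁ x₂ v) (s : ι) :
    pr p S s = c := by
  rw [← sum_pr_pair_right S (fun ω => (V ω, X₁ ω, X₂ ω)) s]
  simp only [Fintype.sum_prod_type, h]
  rw [Finset.sum_comm]
  simp_rw [Finset.sum_comm (γ := γ)]
  simp only [← Finset.mul_sum, hV, mul_one]
  rw [Finset.sum_comm]
  simp only [← Finset.mul_sum, h₁₂, mul_one, h₂]

lemma exists_ne_zero_of_indepRV (hp : ∀ ω, 0 ≤ p ω) {S : Ω → α} {W : Ω → β}
    (h : IndepRV p S W) {s : α} (hs : pr p S s ≠ 0) {ω₀ : Ω} (hω₀ : p ω₀ ≠ 0) :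
    ∃ ω, p ω ≠ 0 ∧ S ω = s ∧ W ω = W ω₀ := by
  have hW : pr p W (W ω₀) ≠ 0 := (((hp ω₀).lt_of_ne' hω₀).trans_le (le_pr_self hp W ω₀)).ne'
  obtain ⟨ω, hω, hSW⟩ := exists_ne_zero_of_pr_ne_zero (p := p) (X := fun ω => (S ω, W ω))
    (x := (s, W ω₀)) (by rw [h]; exact mul_ne_zero hs hW)
  exact ⟨ω, hω, Prod.mk.inj hSW⟩

end Pmf

section Entropy

variable {Ω α β : Type*} [Fintype Ω] {p : Ω → ℝ}

lemma ent_eq_neg_sum [Fintype α] (X : Ω → α) :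
    ent p X = -∑ x, pr p X x * logb 2 (pr p X x) := by
  unfold ent
  congr 1
  refine Finset.sum_subset (Finset.subset_univ _) fun x _ hx => ?_
  have : pr p X x = 0 := Finset.sum_eq_zero fun ω _ => by
    simp only [Finset.mem_image, Finset.mem_univ, true_and, not_exists] at hx
    simp [hx ω]
  simp [this]

lemma ent_congr [Fintype α] {X Y : Ω → α} (h : ∀ ω, p ω ≠ 0 → X ω = Y ω) :
    ent p X = ent p Y := by
  rw [ent_eq_neg_sum, ent_eq_neg_sum, pr_congr h]

lemma ent_comp_of_injective {f : α → β} (hf : Function.Injective f) (X : Ω → α) :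
    ent p (fun ω => f (X ω)) = ent p X := by
  have hpr : ∀ x, pr p (fun ω => f (X ω)) (f x) = pr p X x := fun x => by
    simp only [pr, hf.eq_iff]
  unfold ent
  rw [show Finset.univ.image (fun ω => f (X ω)) = (Finset.univ.image X).image f from
    Finset.image_image.symm, Finset.sum_image fun x _ y _ h => hf h]
  simp only [hpr]

lemma ent_pair_comm (X : Ω → α) (Y : Ω → β) :
    ent p (fun ω => (Y ω, X ω)) = ent p (fun ω => (X ω, Y ω)) :=
  ent_comp_of_injective (f := @Prod.swap α β) Prod.swap_injective (fun ω => (X ω, Y ω))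

lemma mi_comm (X : Ω → α) (Y : Ω → β) : mi p X Y = mi p Y X := by
  unfold mi
  rw [ent_pair_comm]
  ring

lemma condEnt_eq_zero_of_forall_ne_zero [Fintype α] [Fintype β] {X : Ω → α} {Z : Ω → β}
    (f : β → α) (h : ∀ ω, p ω ≠ 0 → X ω = f (Z ω)) : condEnt p X Z = 0 := by
  have hinj : Function.Injective fun z => (f z, z) := fun _ _ h => (Prod.mk.inj h).2
  unfold condEnt
  rw [ent_congr (Y := fun ω => (f (Z ω), Z ω)) fun ω hω => by rw [h ω hω],
    ent_comp_of_injective hinj, sub_self]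

end Entropy

section LogInequalities

variable {a b : ℝ}

lemma mul_log_sub_mul_log_le (ha : 0 ≤ a) (hb : 0 < b) : a * log b - a * log a ≤ b - a := by
  have h := self_sub_one_le_mul_log (div_nonneg ha hb.le)
  rcases ha.eq_or_lt with rfl | ha
  · simpa using hb.le
  rw [log_div ha.ne' hb.ne'] at h
  have h' := mul_le_mul_of_nonneg_left h hb.le
  field_simp at h'
  linarith

lemma mul_log_sub_mul_log_lt (ha : 0 ≤ a) (hb : 0 < b) (hab : a ≠ b) :
    a * log b - a * log a < b - a := by
  have h := self_sub_one_lt_mul_log (div_nonneg ha hb.le) (by rwa [ne_eq, div_eq_one_iff_eq hb.ne'])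
  rcases ha.eq_or_lt with rfl | ha
  · simpa using hb
  rw [log_div ha.ne' hb.ne'] at h
  have h' := mul_lt_mul_of_pos_left h hb
  field_simp at h'
  linarith

lemma mul_logb_sub_mul_logb_eq_div (a b : ℝ) :
    a * logb 2 b - a * logb 2 a = (a * log b - a * log a) / log 2 := by
  simp only [logb]
  ring

lemma mul_logb_sub_mul_logb_le (ha : 0 ≤ a) (hb : 0 ≤ b) (hab : b = 0 → a = 0) :
    a * logb 2 b - a * logb 2 a ≤ (b - a) / log 2 := by
  rcases hb.eq_or_lt with rfl | hb
  · simp [hab rfl]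
  rw [mul_logb_sub_mul_logb_eq_div]
  exact div_le_div_of_nonneg_right (mul_log_sub_mul_log_le ha hb) (log_pos one_lt_two).le

lemma mul_logb_sub_mul_logb_lt (ha : 0 ≤ a) (hb : 0 ≤ b) (hab : b = 0 → a = 0) (hne : a ≠ b) :
    a * logb 2 b - a * logb 2 a < (b - a) / log 2 := by
  rcases hb.eq_or_lt with rfl | hb
  · exact absurd (hab rfl) hne
  rw [mul_logb_sub_mul_logb_eq_div]
  exact div_lt_div_of_pos_right (mul_log_sub_mul_log_lt ha hb hne) (log_pos one_lt_two)

end LogInequalities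

section GibbsInequality

variable {ι : Type*} [Fintype ι] {a b : ι → ℝ}

theorem sum_mul_logb_lt_sum_mul_logb (ha : ∀ i, 0 ≤ a i) (hb : ∀ i, 0 ≤ b i)
    (hab : ∀ i, b i = 0 → a i = 0) (hsum : ∑ i, b i ≤ ∑ i, a i) (hne : a ≠ b) :
    ∑ i, a i * logb 2 (b i) < ∑ i, a i * logb 2 (a i) := by
  obtain ⟨i, hi⟩ := Function.ne_iff.mp hne
  have h := Finset.sum_lt_sum (fun j _ => mul_logb_sub_mul_logb_le (ha j) (hb j) (hab j))
    ⟨i, Finset.mem_univ i, mul_logb_sub_mul_logb_lt (ha i) (hb i) (hab i) hi⟩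
  rw [Finset.sum_sub_distrib, ← Finset.sum_div, Finset.sum_sub_distrib] at h
  have : (∑ i, b i - ∑ i, a i) / log 2 ≤ 0 :=
    div_nonpos_of_nonpos_of_nonneg (sub_nonpos.2 hsum) (log_pos one_lt_two).le
  linarith

theorem sum_mul_logb_le_sum_mul_logb (ha : ∀ i, 0 ≤ a i) (hb : ∀ i, 0 ≤ b i)
    (hab : ∀ i, b i = 0 → a i = 0) (hsum : ∑ i, b i ≤ ∑ i, a i) :
    ∑ i, a i * logb 2 (b i) ≤ ∑ i, a i * logb 2 (a i) := by
  by_cases hne : a = b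
  · rw [hne]
  · exact (sum_mul_logb_lt_sum_mul_logb ha hb hab hsum hne).le

end GibbsInequality

section InformationInequalities

variable {Ω α β : Type*} [Fintype Ω] [Fintype α] [Fintype β] {p : Ω → ℝ}

lemma ent_eq_neg_sum_pair_left (X : Ω → α) (Y : Ω → β) :
    ent p X = -∑ z : α × β, pr p (fun ω => (X ω, Y ω)) z * logb 2 (pr p X z.1) := by
  rw [ent_eq_neg_sum, Fintype.sum_prod_type]
  simp only [← Finset.sum_mul, sum_pr_pair_right]

lemma ent_eq_neg_sum_pair_right (X : Ω → α) (Y : Ω → β) :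
    ent p Y = -∑ z : α × β, pr p (fun ω => (X ω, Y ω)) z * logb 2 (pr p Y z.2) := by
  rw [ent_eq_neg_sum, Fintype.sum_prod_type_right]
  simp only [← Finset.sum_mul, sum_pr_pair_left]

lemma ent_le_logb_card [Nonempty α] (hp : IsPMF p) (X : Ω → α) :
    ent p X ≤ logb 2 (Fintype.card α) := by
  have hcard : (0 : ℝ) < Fintype.card α := by exact_mod_cast Fintype.card_pos
  have h := sum_mul_logb_le_sum_mul_logb (a := pr p X) (b := fun _ => (Fintype.card α : ℝ)⁻¹)
    (pr_nonneg hp.1 X) (fun _ => by positivity) (fun _ h => absurd h (by positivity))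
    (by simp [sum_pr, hp.2, hcard.ne'])
  rw [← Finset.sum_mul, sum_pr, hp.2, logb_inv] at h
  rw [ent_eq_neg_sum]
  linarith

lemma mi_eq_sum_sub_sum (hp : ∀ ω, 0 ≤ p ω) (X : Ω → α) (Y : Ω → β) :
    mi p X Y = ∑ z : α × β, pr p (fun ω => (X ω, Y ω)) z * logb 2 (pr p (fun ω => (X ω, Y ω)) z)
      - ∑ z : α × β, pr p (fun ω => (X ω, Y ω)) z * logb 2 (pr p X z.1 * pr p Y z.2) := by
  have hsplit : ∀ z : α × β, pr p (fun ω => (X ω, Y ω)) z * logb 2 (pr p X z.1 * pr p Y z.2)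
      = pr p (fun ω => (X ω, Y ω)) z * logb 2 (pr p X z.1)
        + pr p (fun ω => (X ω, Y ω)) z * logb 2 (pr p Y z.2) := by
    rintro ⟨x, y⟩
    by_cases hx : pr p X x = 0
    · simp [pr_pair_eq_zero_of_pr_left_eq_zero hp hx]
    by_cases hy : pr p Y y = 0
    · simp [pr_pair_eq_zero_of_pr_right_eq_zero hp X hy]
    rw [logb_mul hx hy, mul_add]
  unfold mi
  rw [ent_eq_neg_sum_pair_left X Y, ent_eq_neg_sum_pair_right X Y,
    ent_eq_neg_sum (fun ω => (X ω, Y ω))]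
  simp only [hsplit, Finset.sum_add_distrib]
  ring

lemma mi_eq_zero_of_indepRV (hp : ∀ ω, 0 ≤ p ω) {X : Ω → α} {Y : Ω → β} (h : IndepRV p X Y) :
    mi p X Y = 0 := by
  rw [mi_eq_sum_sub_sum hp, sub_eq_zero]
  exact Finset.sum_congr rfl fun z _ => by rw [h z.1 z.2]

lemma mi_pos_of_not_indepRV (hp : IsPMF p) {X : Ω → α} {Y : Ω → β} (h : ¬IndepRV p X Y) :
    0 < mi p X Y := by
  have hne : (pr p fun ω => (X ω, Y ω)) ≠ fun z : α × β => pr p X z.1 * pr p Y z.2 :=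
    fun heq => h fun x y => congrFun heq (x, y)
  have hprod : ∑ z : α × β, pr p X z.1 * pr p Y z.2 = 1 := by
    rw [Fintype.sum_prod_type, ← Finset.sum_mul_sum, sum_pr, sum_pr, hp.2, one_mul]
  rw [mi_eq_sum_sub_sum hp.1, sub_pos]
  refine sum_mul_logb_lt_sum_mul_logb (pr_nonneg hp.1 _)
    (fun z => mul_nonneg (pr_nonneg hp.1 X z.1) (pr_nonneg hp.1 Y z.2)) ?_ ?_ hne
  · rintro ⟨x, y⟩ hxy
    rcases mul_eq_zero.mp hxy with hx | hy
    · exact pr_pair_eq_zero_of_pr_left_eq_zero hp.1 hx Y y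
    · exact pr_pair_eq_zero_of_pr_right_eq_zero hp.1 X hy x
  · rw [hprod, sum_pr, hp.2]

lemma mi_nonneg (hp : IsPMF p) (X : Ω → α) (Y : Ω → β) : 0 ≤ mi p X Y := by
  by_cases h : IndepRV p X Y
  · exact (mi_eq_zero_of_indepRV hp.1 h).ge
  · exact (mi_pos_of_not_indepRV hp h).le

lemma indepRV_of_mi_eq_zero (hp : IsPMF p) {X : Ω → α} {Y : Ω → β} (h : mi p X Y = 0) :
    IndepRV p X Y :=
  not_not.mp fun hXY => (mi_pos_of_not_indepRV hp hXY).ne' h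

lemma ent_pair_sub_ent_eq_sum (X : Ω → α) (Y : Ω → β) :
    ent p (fun ω => (X ω, Y ω)) - ent p X = ∑ z : α × β,
      (pr p (fun ω => (X ω, Y ω)) z * logb 2 (pr p X z.1)
        - pr p (fun ω => (X ω, Y ω)) z * logb 2 (pr p (fun ω => (X ω, Y ω)) z)) := by
  rw [ent_eq_neg_sum_pair_left X Y, ent_eq_neg_sum (fun ω => (X ω, Y ω)), Finset.sum_sub_distrib]
  ring

lemma ent_le_ent_pair (hp : ∀ ω, 0 ≤ p ω) (X : Ω → α) (Y : Ω → β) :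
    ent p X ≤ ent p (fun ω => (X ω, Y ω)) := by
  rw [← sub_nonneg, ent_pair_sub_ent_eq_sum]
  exact Finset.sum_nonneg fun z _ => sub_nonneg.2 (pr_pair_mul_logb_le hp X Y z)

lemma pr_pair_eq_of_ent_pair_eq (hp : ∀ ω, 0 ≤ p ω) {X : Ω → α} {Y : Ω → β}
    (h : ent p (fun ω => (X ω, Y ω)) = ent p X) {x : α} {y : β}
    (hxy : pr p (fun ω => (X ω, Y ω)) (x, y) ≠ 0) :
    pr p (fun ω => (X ω, Y ω)) (x, y) = pr p X x := by
  by_contra hne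
  have hpos := (pr_nonneg hp _ (x, y)).lt_of_ne' hxy
  have hlt := (pr_pair_le_left hp X Y x y).lt_of_ne hne
  have : 0 < ent p (fun ω => (X ω, Y ω)) - ent p X := by
    rw [ent_pair_sub_ent_eq_sum]
    exact Finset.sum_pos' (fun z _ => sub_nonneg.2 (pr_pair_mul_logb_le hp X Y z))
      ⟨(x, y), Finset.mem_univ _, sub_pos.2 (mul_lt_mul_of_pos_left
        (logb_lt_logb one_lt_two hpos hlt) hpos)⟩
  linarith

lemma eq_of_ent_pair_eq (hp : ∀ ω, 0 ≤ p ω) {X : Ω → α} {Y : Ω → β}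
    (h : ent p (fun ω => (X ω, Y ω)) = ent p X) {ω ω' : Ω} (hω : p ω ≠ 0) (hω' : p ω' ≠ 0)
    (hX : X ω = X ω') : Y ω = Y ω' := by
  by_contra hne
  have hpos : ∀ {ω₀}, p ω₀ ≠ 0 → X ω₀ = X ω' →
      0 < pr p (fun ω => (X ω, Y ω)) (X ω', Y ω₀) := fun {ω₀} hω₀ hX₀ =>
    hX₀ ▸ ((hp ω₀).lt_of_ne' hω₀).trans_le (le_pr_self hp (fun ω => (X ω, Y ω)) ω₀)
  have h₁ := pr_pair_eq_of_ent_pair_eq hp h (hpos hω hX).ne'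
  have h₂ := pr_pair_eq_of_ent_pair_eq hp h (hpos hω' rfl).ne'
  have hsum := Finset.sum_le_univ_sum_of_nonneg (s := {Y ω, Y ω'})
    (f := fun y => pr p (fun ω => (X ω, Y ω)) (X ω', y)) (fun y => pr_nonneg hp _ _)
  rw [Finset.sum_pair hne, sum_pr_pair_right, h₁, h₂] at hsum
  linarith [hpos hω' rfl]

lemma mi_le_ent_right (hp : ∀ ω, 0 ≤ p ω) (X : Ω → α) (Y : Ω → β) : mi p X Y ≤ ent p Y := by
  have := ent_le_ent_pair hp X Y
  unfold mi
  linarith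

end InformationInequalities

/-- **Switch channel, Example 1 (first part).**  The state `S` is uniform on a two-element
set (`S = 0` selects `X₁`, `S = 1` selects `X₂`), the joint pmf of `(S,V,X₁,X₂)` has the
product form `(1/2)·P_{X₂}(x₂)·P_{X₁|X₂}(x₁|x₂)·P_{V|S,X₁,X₂}(v|s,x₁,x₂)` and `Y = X_S`.
If `I(V,X₁,X₂ ; Y) - I(V,X₁,X₂ ; S) ≥ 1`, then `H(Y) = 1`, `S` is independent of
`(V,X₁,X₂)`, `H(Y|X₁,X₂) = 0` and `P(X₁ = X₂) = 1`. -/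
theorem switch_channel_sum_rate_consequences
    {Ω 𝒱 : Type*} [Fintype Ω] [Fintype 𝒱]
    (p : Ω → ℝ) (hp : IsPMF p)
    (S : Ω → Fin 2) (V : Ω → 𝒱) (X₁ X₂ Y : Ω → Bool)
    (hform : ∃ (PX2 : Bool → ℝ) (PX12 : Bool → Bool → ℝ) (PV : Fin 2 → Bool → Bool → 𝒱 → ℝ),
      (∀ x2, 0 ≤ PX2 x2) ∧ (∑ x2, PX2 x2 = 1) ∧
      (∀ x1 x2, 0 ≤ PX12 x1 x2) ∧ (∀ x2, ∑ x1, PX12 x1 x2 = 1) ∧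
      (∀ s x1 x2 v, 0 ≤ PV s x1 x2 v) ∧ (∀ s x1 x2, ∑ v, PV s x1 x2 v = 1) ∧
      (∀ s v x1 x2, pr p (fun ω => (S ω, V ω, X₁ ω, X₂ ω)) (s, v, x1, x2)
          = 1/2 * PX2 x2 * PX12 x1 x2 * PV s x1 x2 v))
    (hY : ∀ ω, Y ω = if S ω = 0 then X₁ ω else X₂ ω)
    (hI : 1 ≤ mi p (fun ω => (V ω, X₁ ω, X₂ ω)) Y - mi p (fun ω => (V ω, X₁ ω, X₂ ω)) S) :
    ent p Y = 1 ∧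
    IndepRV p S (fun ω => (V ω, X₁ ω, X₂ ω)) ∧
    condEnt p Y (fun ω => (X₁ ω, X₂ ω)) = 0 ∧
    (∑ ω : Ω, if X₁ ω = X₂ ω then p ω else 0) = 1 := by
  obtain ⟨PX2, PX12, PV, -, hPX2, -, hPX12, -, hPV, hjoint⟩ := hform
  set W := fun ω => (V ω, X₁ ω, X₂ ω)
  have hS : ∀ s, pr p S s = 1 / 2 := pr_eq_of_pr_eq_mul_kernels hPX2 hPX12 hPV hjoint
  have hY_le : ent p Y ≤ 1 := by simpa using ent_le_logb_card hp Y
  have hmiY := mi_le_ent_right hp.1 W Y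
  have hmiS := mi_nonneg hp W S
  have hindep : IndepRV p S W := indepRV_of_mi_eq_zero hp (by rw [mi_comm]; linarith)
  have hdet : ent p (fun ω => (W ω, Y ω)) = ent p W := by unfold mi at hmiY hmiS hI; linarith
  have hX : ∀ ω, p ω ≠ 0 → X₁ ω = X₂ ω := by
    intro ω hω
    -- both states occur together with the value `W ω`, and `Y` is a function of `W`
    obtain ⟨ω₁, hω₁, hS₁, hW₁⟩ := exists_ne_zero_of_indepRV hp.1 hindep (s := 0) (by simp [hS]) hω
    obtain ⟨ω₂, hω₂, hS₂, hW₂⟩ := exists_ne_zero_of_indepRV hp.1 hindep (s := 1) (by simp [hS]) hω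
    have hY₁₂ := eq_of_ent_pair_eq hp.1 hdet hω₁ hω₂ (hW₁.trans hW₂.symm)
    simp only [W, Prod.mk.injEq] at hW₁ hW₂
    simpa [hY, hS₁, hS₂, hW₁, hW₂] using hY₁₂
  refine ⟨by linarith, hindep, condEnt_eq_zero_of_forall_ne_zero Prod.fst fun ω hω => ?_,
    sum_ite_eq_one_of_forall_ne_zero hp hX⟩
  simp [hY, hX ω hω]
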